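/- arXiv:1406.2798 — 2 statements merged into one kernel-verified Lean document; each statement's English description precedes it below -/
import Mathlib

section
/- Let ℓ ≥ 1, 0 < a < b, α ∈ ℝ, and let u ∈ ℝ^ℓ be a unit vector. If f_1(a) ⊆ H⁻(α,u) and f_1(b) ⊆ H⁺(α,u), then u_1 > ∑_{i=2}^ℓ |u_i|. -/
open MeasureTheory

noncomputable section

/-- The hyperplane `H(α,u) = {x : ⟨x,u⟩ = α}` in `ℝ^ℓ`. -/
def Hplane (ℓ : ℕ) (α : ℝ) (u : EuclideanSpace ℝ (Fin ℓ)) : Set (EuclideanSpace ℝ (Fin ℓ)) :=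
  {x | (inner ℝ x u : ℝ) = α}

/-- The closed half-space `H⁻(α,u) = {x : ⟨x,u⟩ ≤ α}`. -/
def Hminus (ℓ : ℕ) (α : ℝ) (u : EuclideanSpace ℝ (Fin ℓ)) : Set (EuclideanSpace ℝ (Fin ℓ)) :=
  {x | (inner ℝ x u : ℝ) ≤ α}

/-- The closed half-space `H⁺(α,u) = {x : ⟨x,u⟩ ≥ α}`. -/
def Hplus (ℓ : ℕ) (α : ℝ) (u : EuclideanSpace ℝ (Fin ℓ)) : Set (EuclideanSpace ℝ (Fin ℓ)) :=
  {x | α ≤ (inner ℝ x u : ℝ)}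

/-- The hyperplane `H(α,u)` separates the sets `A` and `B`. -/
def Separates {ℓ : ℕ} (A B : Set (EuclideanSpace ℝ (Fin ℓ))) (α : ℝ)
    (u : EuclideanSpace ℝ (Fin ℓ)) : Prop :=
  (A ⊆ Hplus ℓ α u ∧ B ⊆ Hminus ℓ α u) ∨ (A ⊆ Hminus ℓ α u ∧ B ⊆ Hplus ℓ α u)

/-- The facet `f_i(c) = {x : x_i = c, |x_j| ≤ c for j ≠ i}` of the cube `[−c,c]^ℓ`. -/
def facetBase (ℓ : ℕ) (i : Fin ℓ) (c : ℝ) : Set (EuclideanSpace ℝ (Fin ℓ)) :=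
  {x | x i = c ∧ ∀ j, j ≠ i → |x j| ≤ c}

/-- The `2ℓ` facets of the cube `[−c,c]^ℓ`, indexed by `Fin ℓ ⊕ Fin ℓ`:
`Sum.inl i` is `f_i(c)` and `Sum.inr i` is `f_{i+ℓ}(c) = −f_i(c)`. -/
def facet (ℓ : ℕ) (i : Fin ℓ ⊕ Fin ℓ) (c : ℝ) : Set (EuclideanSpace ℝ (Fin ℓ)) :=
  match i with
  | Sum.inl i => facetBase ℓ i c
  | Sum.inr i => (fun x => -x) '' facetBase ℓ i c

/-- The unit sphere `S^{ℓ−1}` in `ℝ^ℓ`. -/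
abbrev unitSphere (ℓ : ℕ) : Set (EuclideanSpace ℝ (Fin ℓ)) :=
  Metric.sphere (0 : EuclideanSpace ℝ (Fin ℓ)) 1

/-- `Ĝ_i(a,b)`: the set of parameters `(α,u) ∈ [0,∞) × S^{ℓ−1}` such that `H(α,u)`
separates `f_i(a)` and `f_i(b)`. -/
def Ghat (ℓ : ℕ) (i : Fin ℓ ⊕ Fin ℓ) (a b : ℝ) : Set (ℝ × unitSphere ℓ) :=
  {p | 0 ≤ p.1 ∧ Separates (facet ℓ i a) (facet ℓ i b) p.1 (p.2 : EuclideanSpace ℝ (Fin ℓ))}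

/-- The hyperplane measure `μ = γ·(λ ⊗ θ)` on `ℝ × S^{ℓ−1}`. -/
def hypMeasure (ℓ : ℕ) (γ : ℝ) (θ : Measure (unitSphere ℓ)) : Measure (ℝ × unitSphere ℓ) :=
  ENNReal.ofReal γ • ((volume : Measure ℝ).prod θ)


/-!
Taking `x_j = ±c · sign u_j` for `j ≥ 2` maximizes, resp. minimizes, `⟨x, u⟩` over `f_1(c)`, so
`a (u_1 + S) ≤ α ≤ b (u_1 - S)` with `S = ∑_{j ≥ 2} |u_j|`. Since `0 < a < b`, this forces
`S < u_1` unless `u_1 = S = 0`, which `u ≠ 0` excludes.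
-/

open Finset

theorem abs_sign_le_one (x : ℝ) : |(SignType.sign x : ℝ)| ≤ 1 := by
  rcases SignType.sign x with _ | _ | _ <;> simp

theorem exists_mem_facetBase_inner_eq {ℓ : ℕ} (i : Fin ℓ) {c : ℝ} (hc : 0 ≤ c) {ε : ℝ}
    (hε : |ε| ≤ 1) (u : EuclideanSpace ℝ (Fin ℓ)) :
    ∃ x ∈ facetBase ℓ i c, inner ℝ x u = c * u i + ε * c * ∑ j ∈ univ.erase i, |u j| := by
  let x : EuclideanSpace ℝ (Fin ℓ) :=
    WithLp.toLp 2 fun j => if j = i then c else ε * c * SignType.sign (u j)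
  refine ⟨x, ⟨by simp [x], fun j hj => ?_⟩, ?_⟩
  · simp only [x, if_neg hj, abs_mul, abs_of_nonneg hc]
    calc |ε| * c * |(SignType.sign (u j) : ℝ)| ≤ 1 * c * 1 := by
          gcongr
          exact abs_sign_le_one _
      _ = c := by ring
  · rw [PiLp.inner_apply, ← add_sum_erase _ _ (mem_univ i), mul_sum]
    congr 1
    · simp [x, mul_comm]
    · refine sum_congr rfl fun j hj => ?_
      simp only [x, RCLike.inner_apply, conj_trivial, if_neg (ne_of_mem_erase hj)]
      rw [← sign_mul_self (u j)]
      ring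

theorem sum_abs_pos_of_ne_zero {ι : Type*} [Fintype ι] {u : EuclideanSpace ℝ ι} (hu : u ≠ 0) :
    0 < ∑ j, |u j| := by
  obtain ⟨j, hj⟩ : ∃ j, u j ≠ 0 := by
    by_contra! h
    exact hu (by ext j; simp [h j])
  exact sum_pos' (fun j _ => abs_nonneg _) ⟨j, mem_univ j, abs_pos.2 hj⟩

theorem lt_of_mul_add_le_mul_sub {a b x s : ℝ} (ha : 0 < a) (hab : a < b) (hs : 0 ≤ s)
    (hx : 0 < |x| + s) (h : a * (x + s) ≤ b * (x - s)) : s < x := by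
  by_contra! hxs
  obtain rfl : s = 0 := by nlinarith
  obtain rfl : x = 0 := by nlinarith
  simp at hx

/-- If the hyperplane `H(α,u)` (with `u` a unit vector) has `f_1(a) ⊆ H⁻(α,u)` and
`f_1(b) ⊆ H⁺(α,u)` for `0 < a < b`, then `u_1 > ∑_{i=2}^ℓ |u_i|`. -/
theorem stmt6 (ℓ : ℕ) (hℓ : 0 < ℓ) (a b : ℝ) (ha : 0 < a) (hab : a < b)
    (α : ℝ) (u : EuclideanSpace ℝ (Fin ℓ)) (hu : ‖u‖ = 1)
    (h1 : facetBase ℓ ⟨0, hℓ⟩ a ⊆ Hminus ℓ α u)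
    (h2 : facetBase ℓ ⟨0, hℓ⟩ b ⊆ Hplus ℓ α u) :
    (∑ i ∈ Finset.univ.erase ⟨0, hℓ⟩, |u i|) < u ⟨0, hℓ⟩ := by
  set i : Fin ℓ := ⟨0, hℓ⟩
  obtain ⟨x, hxa, hx⟩ := exists_mem_facetBase_inner_eq i ha.le (ε := 1) (by simp) u
  obtain ⟨y, hyb, hy⟩ := exists_mem_facetBase_inner_eq i (ha.trans hab).le (ε := -1) (by simp) u
  have hxα : inner ℝ x u ≤ α := h1 hxa
  have hαy : α ≤ inner ℝ y u := h2 hyb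
  have hu0 : u ≠ 0 := by rintro rfl; simp at hu
  refine lt_of_mul_add_le_mul_sub ha hab (sum_nonneg fun j _ => abs_nonneg _) ?_ ?_
  · rw [add_sum_erase univ (fun j => |u j|) (mem_univ i)]
    exact sum_abs_pos_of_ne_zero hu0
  · linarith

end
end

section
/- Let ℓ ≥ 1, let γ > 0, let θ be a Borel probability measure on the unit sphere S^{ℓ−1} ⊆ ℝ^ℓ, and let μ = γ·(λ ⊗ θ) where λ is Lebesgue measure on ℝ. Then for all 0 < a < b, μ(Ĝ_1(a,b)) = γ·∫_{S^{ℓ−1}} max( b·(u_1 − S(u)) − a·(u_1 + S(u)), 0 ) θ(du), where S(u) = ∑_{i=2}^ℓ |u_i|. -/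
open MeasureTheory

noncomputable section

/-! For `c ≥ 0` the functional `⟪·, u⟫` ranges over `[c (u_i - S), c (u_i + S)]` on the facet
`f_i(c)`, with `S = ∑_{j ≠ i} |u_j|`, the extremes being attained at vertices. Hence, for `α ≥ 0`
and `0 < a < b`, `H(α, u)` separates `f_i(a)` from `f_i(b)` iff `a (u_i + S) ≤ α ≤ b (u_i - S)`:
the opposite orientation would force `u = 0`. By Tonelli, `μ(Ĝ_i(a, b))` is `γ` times the
`θ`-integral of the lengths `(R - max L 0)⁺` of these intervals, and `(R - max L 0)⁺ = (R - L)⁺`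
because `L < 0` forces `u_i < 0` and then `R ≤ 0`. -/

open Finset

section Facet

variable {ℓ : ℕ}

def sumAbsErase (i : Fin ℓ) (u : EuclideanSpace ℝ (Fin ℓ)) : ℝ :=
  ∑ j ∈ univ.erase i, |u j|

lemma sumAbsErase_nonneg (i : Fin ℓ) (u : EuclideanSpace ℝ (Fin ℓ)) : 0 ≤ sumAbsErase i u :=
  sum_nonneg fun _ _ => abs_nonneg _

lemma sumAbsErase_neg (i : Fin ℓ) (u : EuclideanSpace ℝ (Fin ℓ)) :
    sumAbsErase i (-u) = sumAbsErase i u := by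
  simp [sumAbsErase]

@[fun_prop]
lemma continuous_sumAbsErase (i : Fin ℓ) : Continuous (sumAbsErase (ℓ := ℓ) i) := by
  unfold sumAbsErase
  fun_prop

lemma abs_apply_add_sumAbsErase_pos (i : Fin ℓ) {u : EuclideanSpace ℝ (Fin ℓ)} (hu : u ≠ 0) :
    0 < |u i| + sumAbsErase i u := by
  rw [sumAbsErase, add_sum_erase _ (fun j => |u j|) (mem_univ i)]
  obtain ⟨j, hj⟩ : ∃ j, u j ≠ 0 := by
    by_contra! h
    exact hu (PiLp.ext h)
  exact sum_pos' (fun _ _ => abs_nonneg _) ⟨j, mem_univ j, abs_pos.2 hj⟩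

lemma inner_eq_apply_mul_add_sum_erase (i : Fin ℓ) (x u : EuclideanSpace ℝ (Fin ℓ)) :
    inner ℝ x u = x i * u i + ∑ j ∈ univ.erase i, x j * u j := by
  rw [add_sum_erase _ (fun j => x j * u j) (mem_univ i)]
  simp [PiLp.inner_apply, mul_comm]

lemma inner_le_of_mem_facetBase {i : Fin ℓ} {c : ℝ} {x : EuclideanSpace ℝ (Fin ℓ)}
    (hx : x ∈ facetBase ℓ i c) (u : EuclideanSpace ℝ (Fin ℓ)) :
    inner ℝ x u ≤ c * (u i + sumAbsErase i u) := by
  rw [inner_eq_apply_mul_add_sum_erase i, hx.1, mul_add, sumAbsErase, mul_sum]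
  gcongr (_ + ?_)
  refine sum_le_sum fun j hj => ?_
  calc x j * u j ≤ |x j| * |u j| := abs_mul (x j) (u j) ▸ le_abs_self _
    _ ≤ c * |u j| := by gcongr; exact hx.2 j (ne_of_mem_erase hj)

def facetVertex (i : Fin ℓ) (c : ℝ) (u : EuclideanSpace ℝ (Fin ℓ)) : EuclideanSpace ℝ (Fin ℓ) :=
  WithLp.toLp 2 fun j => if j = i then c else if 0 ≤ u j then c else -c

lemma facetVertex_mem_facetBase (i : Fin ℓ) {c : ℝ} (hc : 0 ≤ c) (u : EuclideanSpace ℝ (Fin ℓ)) :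
    facetVertex i c u ∈ facetBase ℓ i c := by
  refine ⟨by simp [facetVertex], fun j hj => ?_⟩
  simp only [facetVertex, PiLp.toLp_apply, if_neg hj]
  split_ifs <;> simp [abs_of_nonneg hc]

lemma inner_facetVertex (i : Fin ℓ) (c : ℝ) (u : EuclideanSpace ℝ (Fin ℓ)) :
    inner ℝ (facetVertex i c u) u = c * (u i + sumAbsErase i u) := by
  rw [inner_eq_apply_mul_add_sum_erase i, mul_add, sumAbsErase, mul_sum]
  congr 1
  · simp [facetVertex]
  · refine sum_congr rfl fun j hj => ?_
    simp only [facetVertex, PiLp.toLp_apply, if_neg (ne_of_mem_erase hj)]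
    split_ifs with hu
    · rw [abs_of_nonneg hu]
    · rw [abs_of_neg (not_le.1 hu)]; ring

lemma isGreatest_inner_facetBase (i : Fin ℓ) {c : ℝ} (hc : 0 ≤ c)
    (u : EuclideanSpace ℝ (Fin ℓ)) :
    IsGreatest ((inner ℝ · u) '' facetBase ℓ i c) (c * (u i + sumAbsErase i u)) :=
  ⟨⟨_, facetVertex_mem_facetBase i hc u, inner_facetVertex i c u⟩,
    Set.forall_mem_image.2 fun _ hx => inner_le_of_mem_facetBase hx u⟩

lemma facetBase_subset_Hminus_iff (i : Fin ℓ) {c : ℝ} (hc : 0 ≤ c) (α : ℝ)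
    (u : EuclideanSpace ℝ (Fin ℓ)) :
    facetBase ℓ i c ⊆ Hminus ℓ α u ↔ c * (u i + sumAbsErase i u) ≤ α := by
  rw [isLUB_le_iff (isGreatest_inner_facetBase i hc u).isLUB, mem_upperBounds,
    Set.forall_mem_image]
  rfl

lemma facetBase_subset_Hplus_iff (i : Fin ℓ) {c : ℝ} (hc : 0 ≤ c) (α : ℝ)
    (u : EuclideanSpace ℝ (Fin ℓ)) :
    facetBase ℓ i c ⊆ Hplus ℓ α u ↔ α ≤ c * (u i - sumAbsErase i u) := by
  have hneg : Hplus ℓ α u = Hminus ℓ (-α) (-u) := by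
    ext x
    simp [Hplus, Hminus, inner_neg_right]
  rw [hneg, facetBase_subset_Hminus_iff i hc, sumAbsErase_neg, PiLp.neg_apply]
  constructor <;> intro h <;> linarith

lemma mem_Ghat_inl_iff {a b : ℝ} (ha : 0 < a) (hab : a < b) (i : Fin ℓ) (α : ℝ)
    (u : unitSphere ℓ) :
    (α, u) ∈ Ghat ℓ (Sum.inl i) a b ↔
      α ∈ Set.Icc (max (a * ((u : EuclideanSpace ℝ (Fin ℓ)) i + sumAbsErase i u)) 0)
        (b * ((u : EuclideanSpace ℝ (Fin ℓ)) i - sumAbsErase i u)) := by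
  have hb : 0 < b := ha.trans hab
  simp only [Ghat, Separates, facet, Set.mem_ofPred_eq, Set.mem_Icc, max_le_iff,
    facetBase_subset_Hminus_iff i ha.le, facetBase_subset_Hplus_iff i ha.le,
    facetBase_subset_Hminus_iff i hb.le, facetBase_subset_Hplus_iff i hb.le]
  have hS := sumAbsErase_nonneg i u
  have hpos := abs_apply_add_sumAbsErase_pos i (ne_zero_of_mem_unit_sphere u)
  constructor
  · rintro ⟨hα, ⟨hαa, hbα⟩ | ⟨hL, hR⟩⟩
    · -- `f_i(b) ⊆ H⁻` and `f_i(a) ⊆ H⁺` with `α ≥ 0` force `u_i ≥ S(u)`, and then `u = 0`.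
      exfalso
      have hui : sumAbsErase i u ≤ (u : EuclideanSpace ℝ (Fin ℓ)) i := by nlinarith
      rw [abs_of_nonneg (hS.trans hui)] at hpos
      nlinarith [mul_pos (sub_pos.2 hab) hpos]
    · exact ⟨⟨hL, hα⟩, hR⟩
  · rintro ⟨⟨hL, hα⟩, hR⟩
    exact ⟨hα, Or.inr ⟨hL, hR⟩⟩

end Facet

lemma volume_prod_eq_lintegral_of_mem_iff {Y : Type*} [MeasurableSpace Y] (θ : Measure Y)
    [SFinite θ] {f g : Y → ℝ} (hf : Measurable f) (hg : Measurable g) {s : Set (ℝ × Y)}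
    (hs : ∀ x y, (x, y) ∈ s ↔ x ∈ Set.Icc (f y) (g y)) :
    (volume.prod θ) s = ∫⁻ y, ENNReal.ofReal (g y - f y) ∂θ := by
  have hs' : s = {p | p.1 ∈ Set.Icc (f p.2) (g p.2)} := Set.ext fun p => hs p.1 p.2
  have hmeas : MeasurableSet s := hs' ▸
    (measurableSet_le (hf.comp measurable_snd) measurable_fst).inter
      (measurableSet_le measurable_fst (hg.comp measurable_snd))
  rw [Measure.prod_apply_symm hmeas]
  refine lintegral_congr fun y => ?_
  rw [← Real.volume_Icc]
  congr 1
  ext x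
  exact hs x y

lemma ofReal_sub_max_zero_eq {a b s : ℝ} (ha : 0 ≤ a) (hab : a ≤ b) (hs : 0 ≤ s) (t : ℝ) :
    ENNReal.ofReal (b * (t - s) - max (a * (t + s)) 0) =
      ENNReal.ofReal (max (b * (t - s) - a * (t + s)) 0) := by
  rw [ENNReal.ofReal_max, ENNReal.ofReal_zero, max_eq_left (zero_le : (0 : ENNReal) ≤ _)]
  rcases le_or_gt 0 (a * (t + s)) with hL | hL
  · rw [max_eq_left hL]
  · have ht : t + s < 0 := neg_of_mul_neg_right hL ha
    rw [max_eq_right hL.le, sub_zero, ENNReal.ofReal_of_nonpos (by nlinarith),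
      ENNReal.ofReal_of_nonpos (by nlinarith)]

theorem stmt16_general (ℓ : ℕ) (hℓ : 0 < ℓ) (γ : ℝ)
    (θ : Measure (unitSphere ℓ)) [IsProbabilityMeasure θ]
    (a b : ℝ) (ha : 0 < a) (hab : a < b) :
    hypMeasure ℓ γ θ (Ghat ℓ (Sum.inl ⟨0, hℓ⟩) a b) =
      ENNReal.ofReal γ *
        ∫⁻ u : unitSphere ℓ, ENNReal.ofReal
          (max (b * ((u : EuclideanSpace ℝ (Fin ℓ)) ⟨0, hℓ⟩ -
                  ∑ i ∈ Finset.univ.erase ⟨0, hℓ⟩, |(u : EuclideanSpace ℝ (Fin ℓ)) i|) -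
                a * ((u : EuclideanSpace ℝ (Fin ℓ)) ⟨0, hℓ⟩ +
                  ∑ i ∈ Finset.univ.erase ⟨0, hℓ⟩, |(u : EuclideanSpace ℝ (Fin ℓ)) i|))
            0) ∂θ := by
  set i : Fin ℓ := ⟨0, hℓ⟩
  rw [hypMeasure, Measure.smul_apply, smul_eq_mul,
    volume_prod_eq_lintegral_of_mem_iff θ (by fun_prop) (by fun_prop) (mem_Ghat_inl_iff ha hab i)]
  exact congrArg _ (lintegral_congr fun u =>
    ofReal_sub_max_zero_eq ha.le hab.le (sumAbsErase_nonneg i u) _)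

/-- Explicit formula: for `0 < a < b`,
`μ(Ĝ_1(a,b)) = γ·∫ max(b·(u_1 − S(u)) − a·(u_1 + S(u)), 0) θ(du)`,
where `S(u) = ∑_{i=2}^ℓ |u_i|`. -/
theorem stmt16 (ℓ : ℕ) (hℓ : 0 < ℓ) (γ : ℝ) (hγ : 0 < γ)
    (θ : Measure (unitSphere ℓ)) [IsProbabilityMeasure θ]
    (a b : ℝ) (ha : 0 < a) (hab : a < b) :
    hypMeasure ℓ γ θ (Ghat ℓ (Sum.inl ⟨0, hℓ⟩) a b) =
      ENNReal.ofReal γ *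
        ∫⁻ u : unitSphere ℓ, ENNReal.ofReal
          (max (b * ((u : EuclideanSpace ℝ (Fin ℓ)) ⟨0, hℓ⟩ -
                  ∑ i ∈ Finset.univ.erase ⟨0, hℓ⟩, |(u : EuclideanSpace ℝ (Fin ℓ)) i|) -
                a * ((u : EuclideanSpace ℝ (Fin ℓ)) ⟨0, hℓ⟩ +
                  ∑ i ∈ Finset.univ.erase ⟨0, hℓ⟩, |(u : EuclideanSpace ℝ (Fin ℓ)) i|))
            0) ∂θ :=
  stmt16_general ℓ hℓ γ θ a b ha hab
end
end
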